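/- Let Ω ⊆ ℝ² be open with coordinates (x,u) and let F : Ω → ℝ be smooth with ∂_x∂_u F(x₀,u₀) ≠ 0 at a point (x₀,u₀) ∈ Ω. Define J[F] at a point as (F_{uuxx} + F_x·F_{uux} − 2·F_u·F_{uxx} − 2·F_u·F_x·F_{ux})/F_{ux}², where subscripts denote partial derivatives. Let α, β : ℝ → ℝ be smooth near x₀ and u₀ respectively with α'(x₀) ≠ 0 and β'(u₀) ≠ 0, and let C₁ ∈ ℝ satisfy C₁·β'(u)/α'(x)² > 0 for all (x,u) near (x₀,u₀). Suppose F̃ is a smooth function on a neighborhood of (α(x₀), β(u₀)) such that F̃(α(x), β(u)) = F(x,u) − ½·ln(C₁·β'(u)/α'(x)²) for all (x,u) near (x₀,u₀). Then J[F̃](α(x₀), β(u₀)) = J[F](x₀, u₀). -/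

import Mathlib

/-- Partial derivative in the `x`-direction (first coordinate). -/
noncomputable def pdX (f : ℝ × ℝ → ℝ) (p : ℝ × ℝ) : ℝ := fderiv ℝ f p (1, 0)

/-- Partial derivative in the `u`-direction (second coordinate). -/
noncomputable def pdU (f : ℝ × ℝ → ℝ) (p : ℝ × ℝ) : ℝ := fderiv ℝ f p (0, 1)

/-- `J[F] = (F_{uuxx} + F_xF_{uux} − 2F_uF_{uxx} − 2F_uF_xF_{ux})/F_{ux}²`. -/
noncomputable def inv10 (F : ℝ × ℝ → ℝ) (p : ℝ × ℝ) : ℝ :=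
  (pdX (pdX (pdU (pdU F))) p + pdX F p * pdX (pdU (pdU F)) p
      - 2 * pdU F p * pdX (pdX (pdU F)) p
      - 2 * pdU F p * pdX F p * pdX (pdU F) p) /
    (pdX (pdU F) p) ^ 2

/-!
Write `G(x, u) = Ft(α x, β u)`. Near the base point the relation reads
`F = G - log α'(x) + ½ log (C₁ β'(u))`. Adding a function of `x` alone or of `u` alone changes
only `F_x` (by `-α''/α'`) and `F_u` (by `β''/(2β')`) among the partials entering `J`, while the
chain rule expresses the partials of `G` through those of `Ft` and `α', α'', β', β''`.
Substituting everything, `J` becomes a rational function of these quantities in which the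
`α`- and `β`-data cancel identically (`invariantJ_transform`).

Smoothness is only assumed at a point, so every identity between partial derivatives is proved
as an equality of germs (`=ᶠ[𝓝 p]`), which is what the next derivative needs.
-/

open Topology
open scoped ContDiff

section Pointwise

variable {f g : ℝ × ℝ → ℝ} {a b α β : ℝ → ℝ} {p : ℝ × ℝ}

theorem pdX_add (hf : DifferentiableAt ℝ f p) (hg : DifferentiableAt ℝ g p) :
    pdX (fun q => f q + g q) p = pdX f p + pdX g p := by
  simp [pdX, fderiv_fun_add hf hg]

theorem pdU_add (hf : DifferentiableAt ℝ f p) (hg : DifferentiableAt ℝ g p) :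
    pdU (fun q => f q + g q) p = pdU f p + pdU g p := by
  simp [pdU, fderiv_fun_add hf hg]

theorem pdX_mul (hf : DifferentiableAt ℝ f p) (hg : DifferentiableAt ℝ g p) :
    pdX (fun q => f q * g q) p = pdX f p * g p + f p * pdX g p := by
  simp only [pdX, fderiv_fun_mul hf hg, add_apply, smul_apply, smul_eq_mul]
  ring

theorem pdU_mul (hf : DifferentiableAt ℝ f p) (hg : DifferentiableAt ℝ g p) :
    pdU (fun q => f q * g q) p = pdU f p * g p + f p * pdU g p := by
  simp only [pdU, fderiv_fun_mul hf hg, add_apply, smul_apply, smul_eq_mul]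
  ring

theorem hasFDerivAt_comp_fst (ha : DifferentiableAt ℝ a p.1) :
    HasFDerivAt (fun q : ℝ × ℝ => a q.1) (deriv a p.1 • ContinuousLinearMap.fst ℝ ℝ ℝ) p :=
  ha.hasDerivAt.comp_hasFDerivAt p hasFDerivAt_fst

theorem hasFDerivAt_comp_snd (hb : DifferentiableAt ℝ b p.2) :
    HasFDerivAt (fun q : ℝ × ℝ => b q.2) (deriv b p.2 • ContinuousLinearMap.snd ℝ ℝ ℝ) p :=
  hb.hasDerivAt.comp_hasFDerivAt p hasFDerivAt_snd

theorem pdX_comp_fst (ha : DifferentiableAt ℝ a p.1) : pdX (fun q => a q.1) p = deriv a p.1 := by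
  simp [pdX, (hasFDerivAt_comp_fst ha).fderiv]

theorem pdU_comp_fst (ha : DifferentiableAt ℝ a p.1) : pdU (fun q => a q.1) p = 0 := by
  simp [pdU, (hasFDerivAt_comp_fst ha).fderiv]

theorem pdX_comp_snd (hb : DifferentiableAt ℝ b p.2) : pdX (fun q => b q.2) p = 0 := by
  simp [pdX, (hasFDerivAt_comp_snd hb).fderiv]

theorem pdU_comp_snd (hb : DifferentiableAt ℝ b p.2) : pdU (fun q => b q.2) p = deriv b p.2 := by
  simp [pdU, (hasFDerivAt_comp_snd hb).fderiv]

theorem hasFDerivAt_comp_prodMap (hf : DifferentiableAt ℝ f (α p.1, β p.2))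
    (hα : DifferentiableAt ℝ α p.1) (hβ : DifferentiableAt ℝ β p.2) :
    HasFDerivAt (fun q => f (α q.1, β q.2))
      ((fderiv ℝ f (α p.1, β p.2)).comp
        ((ContinuousLinearMap.smulRight (1 : ℝ →L[ℝ] ℝ) (deriv α p.1)).prodMap
          (ContinuousLinearMap.smulRight (1 : ℝ →L[ℝ] ℝ) (deriv β p.2)))) p :=
  hf.hasFDerivAt.comp p (hα.hasDerivAt.hasFDerivAt.prodMap p hβ.hasDerivAt.hasFDerivAt)

theorem pdX_comp_prodMap (hf : DifferentiableAt ℝ f (α p.1, β p.2))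
    (hα : DifferentiableAt ℝ α p.1) (hβ : DifferentiableAt ℝ β p.2) :
    pdX (fun q => f (α q.1, β q.2)) p = deriv α p.1 * pdX f (α p.1, β p.2) := by
  simp only [pdX, (hasFDerivAt_comp_prodMap hf hα hβ).fderiv]
  rw [← smul_eq_mul, ← map_smul]
  simp

theorem pdU_comp_prodMap (hf : DifferentiableAt ℝ f (α p.1, β p.2))
    (hα : DifferentiableAt ℝ α p.1) (hβ : DifferentiableAt ℝ β p.2) :
    pdU (fun q => f (α q.1, β q.2)) p = deriv β p.2 * pdU f (α p.1, β p.2) := by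
  simp only [pdU, (hasFDerivAt_comp_prodMap hf hα hβ).fderiv]
  rw [← smul_eq_mul, ← map_smul]
  simp

end Pointwise

section SmoothGerms

theorem ContDiffAt.eventually_differentiableAt {𝕜 E F : Type*} [NontriviallyNormedField 𝕜]
    [NormedAddCommGroup E] [NormedSpace 𝕜 E] [NormedAddCommGroup F] [NormedSpace 𝕜 F]
    {f : E → F} {x : E} {n : WithTop ℕ∞} (hf : ContDiffAt 𝕜 n f x) (hn : 1 ≤ n) :
    ∀ᶠ y in 𝓝 x, DifferentiableAt 𝕜 f y :=
  ((hf.of_le hn).eventually (by simp)).mono fun _ hy => hy.differentiableAt_one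

variable {f g h : ℝ × ℝ → ℝ} {a b : ℝ → ℝ} {p : ℝ × ℝ}

protected theorem ContDiffAt.deriv {x : ℝ} (ha : ContDiffAt ℝ ∞ a x) :
    ContDiffAt ℝ ∞ (deriv a) x :=
  (ha.fderiv_right (m := ∞) (by simp)).clm_apply contDiffAt_const

protected theorem ContDiffAt.pdX (hf : ContDiffAt ℝ ∞ f p) : ContDiffAt ℝ ∞ (pdX f) p :=
  (hf.fderiv_right (m := ∞) (by simp)).clm_apply contDiffAt_const

protected theorem ContDiffAt.pdU (hf : ContDiffAt ℝ ∞ f p) : ContDiffAt ℝ ∞ (pdU f) p :=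
  (hf.fderiv_right (m := ∞) (by simp)).clm_apply contDiffAt_const

protected theorem Filter.EventuallyEq.pdX (hfg : f =ᶠ[𝓝 p] g) : pdX f =ᶠ[𝓝 p] pdX g :=
  (hfg.fderiv (𝕜 := ℝ)).mono fun q hq => by simp only [pdX, hq]

protected theorem Filter.EventuallyEq.pdU (hfg : f =ᶠ[𝓝 p] g) : pdU f =ᶠ[𝓝 p] pdU g :=
  (hfg.fderiv (𝕜 := ℝ)).mono fun q hq => by simp only [pdU, hq]

theorem eventually_differentiableAt_comp_fst (ha : ContDiffAt ℝ ∞ a p.1) :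
    ∀ᶠ q in 𝓝 p, DifferentiableAt ℝ a q.1 :=
  continuousAt_fst.eventually (ha.eventually_differentiableAt (by simp))

theorem eventually_differentiableAt_comp_snd (hb : ContDiffAt ℝ ∞ b p.2) :
    ∀ᶠ q in 𝓝 p, DifferentiableAt ℝ b q.2 :=
  continuousAt_snd.eventually (hb.eventually_differentiableAt (by simp))

theorem pdX_add_eventuallyEq (hf : ContDiffAt ℝ ∞ f p) (hg : ContDiffAt ℝ ∞ g p) :
    pdX (fun q => f q + g q) =ᶠ[𝓝 p] fun q => pdX f q + pdX g q := by
  filter_upwards [hf.eventually_differentiableAt (by simp),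
    hg.eventually_differentiableAt (by simp)] with q hfq hgq
  exact pdX_add hfq hgq

theorem pdX_mul_comp_fst_eventuallyEq (ha : ContDiffAt ℝ ∞ a p.1) (hh : ContDiffAt ℝ ∞ h p) :
    pdX (fun q => a q.1 * h q) =ᶠ[𝓝 p] fun q => deriv a q.1 * h q + a q.1 * pdX h q := by
  filter_upwards [eventually_differentiableAt_comp_fst ha, hh.eventually_differentiableAt (by simp)]
    with q haq hhq
  rw [pdX_mul (by fun_prop) hhq, pdX_comp_fst haq]

theorem pdX_mul_comp_snd_eventuallyEq (hb : ContDiffAt ℝ ∞ b p.2) (hh : ContDiffAt ℝ ∞ h p) :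
    pdX (fun q => b q.2 * h q) =ᶠ[𝓝 p] fun q => b q.2 * pdX h q := by
  filter_upwards [eventually_differentiableAt_comp_snd hb, hh.eventually_differentiableAt (by simp)]
    with q hbq hhq
  rw [pdX_mul (by fun_prop) hhq, pdX_comp_snd hbq, zero_mul, zero_add]

theorem pdU_mul_comp_snd_eventuallyEq (hb : ContDiffAt ℝ ∞ b p.2) (hh : ContDiffAt ℝ ∞ h p) :
    pdU (fun q => b q.2 * h q) =ᶠ[𝓝 p] fun q => deriv b q.2 * h q + b q.2 * pdU h q := by
  filter_upwards [eventually_differentiableAt_comp_snd hb, hh.eventually_differentiableAt (by simp)]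
    with q hbq hhq
  rw [pdU_mul (by fun_prop) hhq, pdU_comp_snd hbq]

theorem pdX_add_comp_fst_eventuallyEq (hf : ContDiffAt ℝ ∞ f p) (ha : ContDiffAt ℝ ∞ a p.1) :
    pdX (fun q => f q + a q.1) =ᶠ[𝓝 p] fun q => pdX f q + deriv a q.1 := by
  filter_upwards [hf.eventually_differentiableAt (by simp), eventually_differentiableAt_comp_fst ha]
    with q hfq haq
  rw [pdX_add hfq (by fun_prop), pdX_comp_fst haq]

theorem pdU_add_comp_fst_eventuallyEq (hf : ContDiffAt ℝ ∞ f p) (ha : ContDiffAt ℝ ∞ a p.1) :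
    pdU (fun q => f q + a q.1) =ᶠ[𝓝 p] pdU f := by
  filter_upwards [hf.eventually_differentiableAt (by simp), eventually_differentiableAt_comp_fst ha]
    with q hfq haq
  rw [pdU_add hfq (by fun_prop), pdU_comp_fst haq, add_zero]

theorem pdX_add_comp_snd_eventuallyEq (hf : ContDiffAt ℝ ∞ f p) (hb : ContDiffAt ℝ ∞ b p.2) :
    pdX (fun q => f q + b q.2) =ᶠ[𝓝 p] pdX f := by
  filter_upwards [hf.eventually_differentiableAt (by simp), eventually_differentiableAt_comp_snd hb]
    with q hfq hbq
  rw [pdX_add hfq (by fun_prop), pdX_comp_snd hbq, add_zero]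

theorem pdU_add_comp_snd_eventuallyEq (hf : ContDiffAt ℝ ∞ f p) (hb : ContDiffAt ℝ ∞ b p.2) :
    pdU (fun q => f q + b q.2) =ᶠ[𝓝 p] fun q => pdU f q + deriv b q.2 := by
  filter_upwards [hf.eventually_differentiableAt (by simp), eventually_differentiableAt_comp_snd hb]
    with q hfq hbq
  rw [pdU_add hfq (by fun_prop), pdU_comp_snd hbq]

end SmoothGerms

section Pullback

variable {K : ℝ × ℝ → ℝ} {α β w : ℝ → ℝ} {p : ℝ × ℝ}

theorem pdX_comp_prodMap_eventuallyEq (hK : ContDiffAt ℝ ∞ K (α p.1, β p.2))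
    (hα : ContDiffAt ℝ ∞ α p.1) (hβ : ContDiffAt ℝ ∞ β p.2) :
    pdX (fun q => K (α q.1, β q.2)) =ᶠ[𝓝 p] fun q => deriv α q.1 * pdX K (α q.1, β q.2) := by
  have hφ : ContinuousAt (fun q : ℝ × ℝ => (α q.1, β q.2)) p :=
    hα.continuousAt.prodMap hβ.continuousAt
  filter_upwards [hφ.eventually (hK.eventually_differentiableAt (by simp)),
    eventually_differentiableAt_comp_fst hα, eventually_differentiableAt_comp_snd hβ]
    with q hKq hαq hβq
  exact pdX_comp_prodMap hKq hαq hβq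

theorem pdU_comp_prodMap_eventuallyEq (hK : ContDiffAt ℝ ∞ K (α p.1, β p.2))
    (hα : ContDiffAt ℝ ∞ α p.1) (hβ : ContDiffAt ℝ ∞ β p.2) :
    pdU (fun q => K (α q.1, β q.2)) =ᶠ[𝓝 p] fun q => deriv β q.2 * pdU K (α q.1, β q.2) := by
  have hφ : ContinuousAt (fun q : ℝ × ℝ => (α q.1, β q.2)) p :=
    hα.continuousAt.prodMap hβ.continuousAt
  filter_upwards [hφ.eventually (hK.eventually_differentiableAt (by simp)),
    eventually_differentiableAt_comp_fst hα, eventually_differentiableAt_comp_snd hβ]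
    with q hKq hαq hβq
  exact pdU_comp_prodMap hKq hαq hβq

theorem pdX_mul_comp_prodMap_eventuallyEq (hw : ContDiffAt ℝ ∞ w p.2)
    (hK : ContDiffAt ℝ ∞ K (α p.1, β p.2)) (hα : ContDiffAt ℝ ∞ α p.1)
    (hβ : ContDiffAt ℝ ∞ β p.2) :
    pdX (fun q => w q.2 * K (α q.1, β q.2)) =ᶠ[𝓝 p]
      fun q => w q.2 * (deriv α q.1 * pdX K (α q.1, β q.2)) := by
  have hG : ContDiffAt ℝ ∞ (fun q => K (α q.1, β q.2)) p := by fun_prop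
  filter_upwards [pdX_mul_comp_snd_eventuallyEq hw hG,
    pdX_comp_prodMap_eventuallyEq hK hα hβ] with q hwq hKq
  rw [hwq, hKq]

theorem pdX_pdX_mul_comp_prodMap (hw : ContDiffAt ℝ ∞ w p.2)
    (hK : ContDiffAt ℝ ∞ K (α p.1, β p.2)) (hα : ContDiffAt ℝ ∞ α p.1)
    (hβ : ContDiffAt ℝ ∞ β p.2) :
    pdX (pdX (fun q => w q.2 * K (α q.1, β q.2))) p =
      w p.2 * (deriv (deriv α) p.1 * pdX K (α p.1, β p.2)
        + deriv α p.1 * (deriv α p.1 * pdX (pdX K) (α p.1, β p.2))) := by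
  have hKx := hK.pdX
  have hα' := hα.deriv
  rw [(pdX_mul_comp_prodMap_eventuallyEq hw hK hα hβ).pdX.eq_of_nhds,
    (pdX_mul_comp_snd_eventuallyEq hw (by fun_prop)).eq_of_nhds,
    (pdX_mul_comp_fst_eventuallyEq hα' (by fun_prop)).eq_of_nhds,
    (pdX_comp_prodMap_eventuallyEq hKx hα hβ).eq_of_nhds]

theorem pdU_pdU_comp_prodMap_eventuallyEq (hK : ContDiffAt ℝ ∞ K (α p.1, β p.2))
    (hα : ContDiffAt ℝ ∞ α p.1) (hβ : ContDiffAt ℝ ∞ β p.2) :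
    pdU (pdU (fun q => K (α q.1, β q.2))) =ᶠ[𝓝 p]
      fun q => deriv (deriv β) q.2 * pdU K (α q.1, β q.2)
        + deriv β q.2 ^ 2 * pdU (pdU K) (α q.1, β q.2) := by
  have hKu := hK.pdU
  have hGu : ContDiffAt ℝ ∞ (fun q => pdU K (α q.1, β q.2)) p := by fun_prop
  filter_upwards [(pdU_comp_prodMap_eventuallyEq hK hα hβ).pdU,
    pdU_mul_comp_snd_eventuallyEq hβ.deriv hGu,
    pdU_comp_prodMap_eventuallyEq hKu hα hβ] with q h₁ h₂ h₃
  rw [h₁, h₂, h₃]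
  ring

end Pullback

noncomputable def invariantJ (Fx Fu Fux Fuxx Fuux Fuuxx : ℝ) : ℝ :=
  (Fuuxx + Fx * Fuux - 2 * Fu * Fuxx - 2 * Fu * Fx * Fux) / Fux ^ 2

theorem inv10_eq_invariantJ (F : ℝ × ℝ → ℝ) (p : ℝ × ℝ) :
    inv10 F p = invariantJ (pdX F p) (pdU F p) (pdX (pdU F) p) (pdX (pdX (pdU F)) p)
      (pdX (pdU (pdU F)) p) (pdX (pdX (pdU (pdU F))) p) := rfl

theorem invariantJ_transform {a a₂ b b₂ : ℝ} (ha : a ≠ 0) (hb : b ≠ 0)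
    (Kx Ku Kux Kuxx Kuux Kuuxx : ℝ) :
    invariantJ (a * Kx - a₂ / a) (b * Ku + b₂ / (2 * b)) (b * (a * Kux))
      (b * (a₂ * Kux + a * (a * Kuxx))) (b₂ * (a * Kux) + b ^ 2 * (a * Kuux))
      (b₂ * (a₂ * Kux + a * (a * Kuxx)) + b ^ 2 * (a₂ * Kuux + a * (a * Kuuxx))) =
    invariantJ Kx Ku Kux Kuxx Kuux Kuuxx := by
  rcases eq_or_ne Kux 0 with hKux | hKux
  · -- both denominators vanish, and `x / 0 = 0`
    simp [invariantJ, hKux]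
  · unfold invariantJ
    field_simp
    ring

theorem Filter.EventuallyEq.inv10_eq {F G : ℝ × ℝ → ℝ} {p : ℝ × ℝ} (h : F =ᶠ[𝓝 p] G) :
    inv10 F p = inv10 G p := by
  simp only [inv10, h.pdX.eq_of_nhds, h.pdU.eq_of_nhds, h.pdU.pdX.eq_of_nhds,
    h.pdU.pdX.pdX.eq_of_nhds, h.pdU.pdU.pdX.eq_of_nhds, h.pdU.pdU.pdX.pdX.eq_of_nhds]

theorem inv10_add_comp_fst_add_comp_snd {G : ℝ × ℝ → ℝ} {a b : ℝ → ℝ} {p : ℝ × ℝ}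
    (hG : ContDiffAt ℝ ∞ G p) (ha : ContDiffAt ℝ ∞ a p.1) (hb : ContDiffAt ℝ ∞ b p.2) :
    inv10 (fun q => G q + a q.1 + b q.2) p =
      invariantJ (pdX G p + deriv a p.1) (pdU G p + deriv b p.2) (pdX (pdU G) p)
        (pdX (pdX (pdU G)) p) (pdX (pdU (pdU G)) p) (pdX (pdX (pdU (pdU G))) p) := by
  have hGa : ContDiffAt ℝ ∞ (fun q => G q + a q.1) p := by fun_prop
  have hx : pdX (fun q => G q + a q.1 + b q.2) =ᶠ[𝓝 p] fun q => pdX G q + deriv a q.1 :=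
    (pdX_add_comp_snd_eventuallyEq hGa hb).trans (pdX_add_comp_fst_eventuallyEq hG ha)
  have hu : pdU (fun q => G q + a q.1 + b q.2) =ᶠ[𝓝 p] fun q => pdU G q + deriv b q.2 := by
    filter_upwards [pdU_add_comp_snd_eventuallyEq hGa hb, pdU_add_comp_fst_eventuallyEq hG ha]
      with q h₁ h₂
    rw [h₁, h₂]
  have hux : pdX (pdU (fun q => G q + a q.1 + b q.2)) =ᶠ[𝓝 p] pdX (pdU G) :=
    hu.pdX.trans (pdX_add_comp_snd_eventuallyEq hG.pdU hb.deriv)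
  have huu : pdU (pdU (fun q => G q + a q.1 + b q.2)) =ᶠ[𝓝 p]
      fun q => pdU (pdU G) q + deriv (deriv b) q.2 :=
    hu.pdU.trans (pdU_add_comp_snd_eventuallyEq hG.pdU hb.deriv)
  have huux : pdX (pdU (pdU (fun q => G q + a q.1 + b q.2))) =ᶠ[𝓝 p] pdX (pdU (pdU G)) :=
    huu.pdX.trans (pdX_add_comp_snd_eventuallyEq hG.pdU.pdU hb.deriv.deriv)
  rw [inv10_eq_invariantJ, hx.eq_of_nhds, hu.eq_of_nhds, hux.eq_of_nhds, hux.pdX.eq_of_nhds,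
    huux.eq_of_nhds, huux.pdX.eq_of_nhds]

theorem inv10_comp_prodMap_add {K : ℝ × ℝ → ℝ} {α β a b : ℝ → ℝ} {p : ℝ × ℝ}
    (hK : ContDiffAt ℝ ∞ K (α p.1, β p.2)) (hα : ContDiffAt ℝ ∞ α p.1)
    (hβ : ContDiffAt ℝ ∞ β p.2) (ha : ContDiffAt ℝ ∞ a p.1) (hb : ContDiffAt ℝ ∞ b p.2) :
    inv10 (fun q => K (α q.1, β q.2) + a q.1 + b q.2) p =
      invariantJ (deriv α p.1 * pdX K (α p.1, β p.2) + deriv a p.1)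
        (deriv β p.2 * pdU K (α p.1, β p.2) + deriv b p.2)
        (deriv β p.2 * (deriv α p.1 * pdX (pdU K) (α p.1, β p.2)))
        (deriv β p.2 * (deriv (deriv α) p.1 * pdX (pdU K) (α p.1, β p.2)
          + deriv α p.1 * (deriv α p.1 * pdX (pdX (pdU K)) (α p.1, β p.2))))
        (deriv (deriv β) p.2 * (deriv α p.1 * pdX (pdU K) (α p.1, β p.2))
          + deriv β p.2 ^ 2 * (deriv α p.1 * pdX (pdU (pdU K)) (α p.1, β p.2)))
        (deriv (deriv β) p.2 * (deriv (deriv α) p.1 * pdX (pdU K) (α p.1, β p.2)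
            + deriv α p.1 * (deriv α p.1 * pdX (pdX (pdU K)) (α p.1, β p.2)))
          + deriv β p.2 ^ 2 * (deriv (deriv α) p.1 * pdX (pdU (pdU K)) (α p.1, β p.2)
            + deriv α p.1 * (deriv α p.1 * pdX (pdX (pdU (pdU K))) (α p.1, β p.2)))) := by
  have hKu := hK.pdU
  have hKuu := hKu.pdU
  have hβ' := hβ.deriv
  have hβ'' := hβ'.deriv
  have hβ'2 : ContDiffAt ℝ ∞ (fun u => deriv β u ^ 2) p.2 := by fun_prop
  have hG : ContDiffAt ℝ ∞ (fun q => K (α q.1, β q.2)) p := by fun_prop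
  have hT₁ : ContDiffAt ℝ ∞ (fun q => deriv (deriv β) q.2 * pdU K (α q.1, β q.2)) p := by fun_prop
  have hT₂ : ContDiffAt ℝ ∞ (fun q => deriv β q.2 ^ 2 * pdU (pdU K) (α q.1, β q.2)) p := by
    fun_prop
  have hu := pdU_comp_prodMap_eventuallyEq hK hα hβ
  have huu := pdU_pdU_comp_prodMap_eventuallyEq hK hα hβ
  have hux := hu.pdX.trans (pdX_mul_comp_prodMap_eventuallyEq hβ' hKu hα hβ)
  have huxx := hu.pdX.pdX.eq_of_nhds.trans (pdX_pdX_mul_comp_prodMap hβ' hKu hα hβ)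
  have huux : pdX (pdU (pdU (fun q => K (α q.1, β q.2)))) p =
      deriv (deriv β) p.2 * (deriv α p.1 * pdX (pdU K) (α p.1, β p.2))
        + deriv β p.2 ^ 2 * (deriv α p.1 * pdX (pdU (pdU K)) (α p.1, β p.2)) := by
    rw [huu.pdX.eq_of_nhds, (pdX_add_eventuallyEq hT₁ hT₂).eq_of_nhds,
      (pdX_mul_comp_prodMap_eventuallyEq hβ'' hKu hα hβ).eq_of_nhds,
      (pdX_mul_comp_prodMap_eventuallyEq hβ'2 hKuu hα hβ).eq_of_nhds]
  have huuxx : pdX (pdX (pdU (pdU (fun q => K (α q.1, β q.2))))) p =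
      deriv (deriv β) p.2 * (deriv (deriv α) p.1 * pdX (pdU K) (α p.1, β p.2)
          + deriv α p.1 * (deriv α p.1 * pdX (pdX (pdU K)) (α p.1, β p.2)))
        + deriv β p.2 ^ 2 * (deriv (deriv α) p.1 * pdX (pdU (pdU K)) (α p.1, β p.2)
          + deriv α p.1 * (deriv α p.1 * pdX (pdX (pdU (pdU K))) (α p.1, β p.2))) := by
    rw [huu.pdX.pdX.eq_of_nhds, (pdX_add_eventuallyEq hT₁ hT₂).pdX.eq_of_nhds,
      (pdX_add_eventuallyEq hT₁.pdX hT₂.pdX).eq_of_nhds,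
      pdX_pdX_mul_comp_prodMap hβ'' hKu hα hβ, pdX_pdX_mul_comp_prodMap hβ'2 hKuu hα hβ]
  rw [inv10_add_comp_fst_add_comp_snd hG ha hb, (pdX_comp_prodMap_eventuallyEq hK hα hβ).eq_of_nhds,
    hu.eq_of_nhds, hux.eq_of_nhds, huxx, huux, huuxx]

theorem inv10_comp_prodMap_add_log {K : ℝ × ℝ → ℝ} {α β : ℝ → ℝ} {C : ℝ} {p : ℝ × ℝ}
    (hK : ContDiffAt ℝ ∞ K (α p.1, β p.2)) (hα : ContDiffAt ℝ ∞ α p.1)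
    (hβ : ContDiffAt ℝ ∞ β p.2) (hα' : deriv α p.1 ≠ 0) (hC : C * deriv β p.2 ≠ 0) :
    inv10 (fun q => K (α q.1, β q.2) + -Real.log (deriv α q.1) + Real.log (C * deriv β q.2) / 2)
      p = inv10 K (α p.1, β p.2) := by
  have hβ' : deriv β p.2 ≠ 0 := right_ne_zero_of_mul hC
  have ha : ContDiffAt ℝ ∞ (fun x => -Real.log (deriv α x)) p.1 :=
    ((Real.contDiffAt_log.mpr hα').comp p.1 hα.deriv).neg
  have hb : ContDiffAt ℝ ∞ (fun u => Real.log (C * deriv β u) / 2) p.2 :=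
    ((Real.contDiffAt_log.mpr hC).comp p.2 (contDiffAt_const.mul hβ.deriv)).div_const 2
  have hda : HasDerivAt (fun x => -Real.log (deriv α x))
      (-(deriv (deriv α) p.1 / deriv α p.1)) p.1 :=
    ((hα.deriv.differentiableAt (by simp)).hasDerivAt.log hα').neg
  have hdb : HasDerivAt (fun u => Real.log (C * deriv β u) / 2)
      (deriv (deriv β) p.2 / (2 * deriv β p.2)) p.2 := by
    refine ((((hβ.deriv.differentiableAt (by simp)).hasDerivAt.const_mul C).log hC).div_const
      2).congr_deriv ?_
    field_simp [left_ne_zero_of_mul hC]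
  rw [inv10_comp_prodMap_add hK hα hβ ha hb, hda.deriv, hdb.deriv, ← sub_eq_add_neg,
    invariantJ_transform hα' hβ', inv10_eq_invariantJ]

theorem stmt_10_general (x₀ u₀ : ℝ)
    (F : ℝ × ℝ → ℝ)
    (α β : ℝ → ℝ) (hα : ContDiffAt ℝ (⊤ : ℕ∞) α x₀) (hβ : ContDiffAt ℝ (⊤ : ℕ∞) β u₀)
    (C₁ : ℝ)
    (hpos : ∀ᶠ p : ℝ × ℝ in nhds (x₀, u₀), 0 < C₁ * deriv β p.2 / (deriv α p.1) ^ 2)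
    (Ft : ℝ × ℝ → ℝ) (hFt : ContDiffAt ℝ (⊤ : ℕ∞) Ft (α x₀, β u₀))
    (hrel : ∀ᶠ p : ℝ × ℝ in nhds (x₀, u₀),
      Ft (α p.1, β p.2) = F p - (1 / 2) * Real.log (C₁ * deriv β p.2 / (deriv α p.1) ^ 2)) :
    inv10 Ft (α x₀, β u₀) = inv10 F (x₀, u₀) := by
  have hne : ∀ {q : ℝ × ℝ}, 0 < C₁ * deriv β q.2 / deriv α q.1 ^ 2 →
      C₁ * deriv β q.2 ≠ 0 ∧ deriv α q.1 ≠ 0 := fun hq => by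
    simpa using div_ne_zero_iff.mp hq.ne'
  have hF : F =ᶠ[𝓝 (x₀, u₀)] fun q =>
      Ft (α q.1, β q.2) + -Real.log (deriv α q.1) + Real.log (C₁ * deriv β q.2) / 2 := by
    filter_upwards [hrel, hpos] with q hq hposq
    obtain ⟨hCq, hαq⟩ := hne hposq
    rw [hq, Real.log_div hCq (pow_ne_zero 2 hαq), Real.log_pow]
    ring
  obtain ⟨hC, hα'⟩ := hne hpos.self_of_nhds
  rw [hF.inv10_eq, inv10_comp_prodMap_add_log (p := (x₀, u₀)) hFt hα hβ hα' hC]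

/-- Invariance of `J` under the Lie pseudogroup action
`(x, u, F) ↦ (α(x), β(u), F∘(α⁻¹,β⁻¹) − ½ ln(C₁β'/α'²))`. -/
theorem stmt_10 (Ω : Set (ℝ × ℝ)) (hΩ : IsOpen Ω) (x₀ u₀ : ℝ) (hmem : (x₀, u₀) ∈ Ω)
    (F : ℝ × ℝ → ℝ) (hF : ContDiffOn ℝ (⊤ : ℕ∞) F Ω)
    (hFxu : pdX (pdU F) (x₀, u₀) ≠ 0)
    (α β : ℝ → ℝ) (hα : ContDiffAt ℝ (⊤ : ℕ∞) α x₀) (hβ : ContDiffAt ℝ (⊤ : ℕ∞) β u₀)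
    (hα' : deriv α x₀ ≠ 0) (hβ' : deriv β u₀ ≠ 0)
    (C₁ : ℝ)
    (hpos : ∀ᶠ p : ℝ × ℝ in nhds (x₀, u₀), 0 < C₁ * deriv β p.2 / (deriv α p.1) ^ 2)
    (Ft : ℝ × ℝ → ℝ) (hFt : ContDiffAt ℝ (⊤ : ℕ∞) Ft (α x₀, β u₀))
    (hrel : ∀ᶠ p : ℝ × ℝ in nhds (x₀, u₀),
      Ft (α p.1, β p.2) = F p - (1 / 2) * Real.log (C₁ * deriv β p.2 / (deriv α p.1) ^ 2)) :
    inv10 Ft (α x₀, β u₀) = inv10 F (x₀, u₀) :=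
  stmt_10_general x₀ u₀ F α β hα hβ C₁ hpos Ft hFt hrel
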